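/- Let Ψ(w) be right-continuous nonincreasing on (0,∞) with Ψ(w) ≤ C w^{-β} as w ↓ 0 for some β ∈ (0,1), Ψ(w) → 0 as w → ∞, and lim_{w↓0} Ψ(w) = ∞. Fix c ≥ 0, and for n ≥ 1 set τ₁ = Ψ^{-1}(n), τ₂ = c/n, τ = τ₁ + τ₂, and H^n(w) = Ψ(⌈w/τ⌉τ − τ₂)/n. Then for every continuously differentiable function g with compact support in (0,∞), n ∫_{(0,∞)} g(w) dH^n(w) → ∫_{(0,∞)} g(w) dΨ(w) as n → ∞. -/

import Mathlib

open MeasureTheory Set Filter Topology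
open scoped ENNReal

/-! Proof idea: `Hⁿ` is a step function, constant on the cells `[kτ, (k+1)τ)`, so `-n dHⁿ` has an
atom at `kτ` of mass `Ψ(kτ - τ₂) - Ψ((k+1)τ - τ₂) = ν (Ioc (kτ - τ₂) ((k+1)τ - τ₂))`. Away from `0`
the measure `n μₙ` is therefore the push-forward of `ν` under the map rounding each cell
`Ioc (kτ - τ₂) ((k+1)τ - τ₂)` to `kτ`. Since `τ → 0` this map converges to the identity, and the
claim follows from dominated convergence against a finite restriction of `ν`. -/

/-- The paper's generalised inverse `Ψ⁻¹(y)`. -/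
noncomputable def genInv (Ψ : ℝ → ℝ) (y : ℝ) : ℝ := sInf {w : ℝ | 0 < w ∧ Ψ w ≤ y}

lemma genInv_pos {Ψ : ℝ → ℝ} (hinf : Tendsto Ψ (𝓝[>] 0) atTop) (hlim : Tendsto Ψ atTop (𝓝 0))
    {y : ℝ} (hy : 0 < y) : 0 < genInv Ψ y := by
  obtain ⟨u, hu, hsub⟩ := mem_nhdsGT_iff_exists_Ioo_subset.1 (hinf.eventually_gt_atTop y)
  obtain ⟨w, hwΨ, hw⟩ := ((hlim.eventually_lt_const hy).and (eventually_gt_atTop 0)).exists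
  refine hu.trans_le (le_csInf ⟨w, hw, hwΨ.le⟩ fun v hv => ?_)
  by_contra! hvu
  exact (hsub ⟨hv.1, hvu⟩).not_ge hv.2

lemma tendsto_genInv_atTop (Ψ : ℝ → ℝ) : Tendsto (genInv Ψ) atTop (𝓝 0) := by
  refine tendsto_order.2 ⟨fun a ha => Eventually.of_forall fun y =>
    ha.trans_le (Real.sInf_nonneg fun w hw => hw.1.le), fun a ha => ?_⟩
  filter_upwards [eventually_ge_atTop (Ψ (a / 2))] with y hy
  have hmem : a / 2 ∈ {w : ℝ | 0 < w ∧ Ψ w ≤ y} := ⟨half_pos ha, hy⟩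
  exact (csInf_le ⟨0, fun w hw => hw.1.le⟩ hmem).trans_lt (half_lt_self ha)

section Grid

variable {t : ℝ} (s : ℝ)

/-- `gridRound t s` sends the cell `Ioc (k * t - s) ((k + 1) * t - s)` to the grid point `k * t`. -/
noncomputable def gridRound (t s x : ℝ) : ℝ := ((⌈(x + s) / t - 1⌉ : ℤ) : ℝ) * t

/-- The right end of the cell that `gridRound t s` sends to `⌊w / t⌋ * t`; in this notation
`Hⁿ w = Ψ (gridNext τ τ₂ w) / n`. -/
noncomputable def gridNext (t s w : ℝ) : ℝ := (((⌊w / t⌋ : ℤ) + 1 : ℤ) : ℝ) * t - s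

lemma measurable_gridRound : Measurable (gridRound t s) :=
  (measurable_of_countable _).comp
    ((((measurable_id.add_const s).div_const t).sub_const 1).ceil) |>.mul_const t

lemma lt_gridRound_iff (ht : 0 < t) (a x : ℝ) : a < gridRound t s x ↔ gridNext t s a < x := by
  rw [gridRound, gridNext, ← div_lt_iff₀ ht, ← Int.floor_lt, Int.lt_ceil]
  push_cast
  rw [lt_sub_iff_add_lt, lt_div_iff₀ ht, sub_lt_iff_lt_add]

lemma gridRound_le_iff (ht : 0 < t) (b x : ℝ) : gridRound t s x ≤ b ↔ x ≤ gridNext t s b := by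
  simpa using (lt_gridRound_iff s ht b x).not

lemma gridRound_preimage_Ioc (ht : 0 < t) (a b : ℝ) :
    gridRound t s ⁻¹' Ioc a b = Ioc (gridNext t s a) (gridNext t s b) := by
  ext x
  simp only [mem_preimage, mem_Ioc, lt_gridRound_iff s ht, gridRound_le_iff s ht]

lemma gridNext_mono (ht : 0 < t) : Monotone (gridNext t s) := fun a b hab => by
  have : ((⌊a / t⌋ : ℤ) : ℝ) ≤ ⌊b / t⌋ := by gcongr
  rw [gridNext, gridNext]
  push_cast
  gcongr

lemma sub_lt_gridNext (ht : 0 < t) (w : ℝ) : w - s < gridNext t s w := by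
  have := (div_lt_iff₀ ht).1 (Int.lt_floor_add_one (w / t))
  rw [gridNext]
  push_cast
  linarith

lemma abs_gridRound_sub_le (ht : 0 < t) (x : ℝ) : |gridRound t s x - x| ≤ t + |s| := by
  have hle := mul_le_mul_of_nonneg_right (Int.le_ceil ((x + s) / t - 1)) ht.le
  have hlt := mul_lt_mul_of_pos_right (Int.ceil_lt_add_one ((x + s) / t - 1)) ht
  have hdiv : (x + s) / t * t = x + s := div_mul_cancel₀ _ ht.ne'
  rw [gridRound, abs_le]
  constructor <;> cases abs_cases s <;> nlinarith

lemma tendsto_gridRound {ι : Type*} {l : Filter ι} {t s : ι → ℝ} (ht : ∀ᶠ i in l, 0 < t i)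
    (ht₀ : Tendsto t l (𝓝 0)) (hs₀ : Tendsto s l (𝓝 0)) (x : ℝ) :
    Tendsto (fun i => gridRound (t i) (s i) x) l (𝓝 x) := by
  have hbound : Tendsto (fun i => t i + |s i|) l (𝓝 0) := by
    simpa using ht₀.add hs₀.abs
  rw [tendsto_iff_norm_sub_tendsto_zero]
  refine squeeze_zero' (Eventually.of_forall fun _ => norm_nonneg _) ?_ hbound
  filter_upwards [ht] with i hi
  exact abs_gridRound_sub_le (s i) hi x

end Grid

lemma exists_pos_forall_le_eq_zero {g : ℝ → ℝ} (hg : HasCompactSupport g)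
    (hpos : tsupport g ⊆ Ioi 0) : ∃ δ > 0, ∀ x ≤ δ, g x = 0 := by
  rcases (tsupport g).eq_empty_or_nonempty with h | hne
  · exact ⟨1, one_pos, fun x _ => image_eq_zero_of_notMem_tsupport (h ▸ notMem_empty x)⟩
  obtain ⟨x₀, hx₀, hmin⟩ := hg.exists_isMinOn hne continuousOn_id
  refine ⟨x₀ / 2, half_pos (hpos hx₀), fun x hx => image_eq_zero_of_notMem_tsupport fun hxs => ?_⟩
  have : x₀ ≤ x := hmin hxs
  linarith [half_lt_self (show (0 : ℝ) < x₀ from hpos hx₀)]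

lemma measure_Ioi_eq_ofReal {ν : Measure ℝ} {Ψ : ℝ → ℝ}
    (hν : ∀ a b : ℝ, 0 < a → a ≤ b → ν (Ioc a b) = ENNReal.ofReal (Ψ a - Ψ b))
    (hlim : Tendsto Ψ atTop (𝓝 0)) {a : ℝ} (ha : 0 < a) :
    ν (Ioi a) = ENNReal.ofReal (Ψ a) := by
  have hmono : Monotone fun k : ℕ => Ioc a (a + k) := fun i j hij =>
    Ioc_subset_Ioc_right (by gcongr)
  have hunion : (⋃ k : ℕ, Ioc a (a + k)) = Ioi a := by
    refine Subset.antisymm (iUnion_subset fun k => Ioc_subset_Ioi_self) fun x hx => ?_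
    obtain ⟨k, hk⟩ := exists_nat_ge (x - a)
    exact mem_iUnion.2 ⟨k, hx, by linarith⟩
  have hΨ : Tendsto (fun k : ℕ => Ψ (a + k)) atTop (𝓝 0) :=
    hlim.comp (tendsto_atTop_add_const_left _ a tendsto_natCast_atTop_atTop)
  have hlim' : Tendsto (fun k : ℕ => ν (Ioc a (a + k))) atTop (𝓝 (ENNReal.ofReal (Ψ a))) := by
    refine (ENNReal.tendsto_ofReal (by simpa using tendsto_const_nhds.sub hΨ)).congr fun k => ?_
    exact (hν a _ ha (by simp)).symm
  rw [← hunion]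
  exact tendsto_nhds_unique (tendsto_measure_iUnion_atTop hmono) hlim'

lemma restrict_Ioi_eq_of_forall_Ioc {μ ν : Measure ℝ} {a₀ : ℝ}
    (h : ∀ a b, a₀ ≤ a → a ≤ b → μ (Ioc a b) = ν (Ioc a b))
    (hfin : ∀ a b, a₀ ≤ a → a ≤ b → μ (Ioc a b) ≠ ∞) :
    μ.restrict (Ioi a₀) = ν.restrict (Ioi a₀) := by
  have key : ∀ a b, μ (Ioc (max a a₀) b) = ν (Ioc (max a a₀) b) ∧ μ (Ioc (max a a₀) b) ≠ ∞ := by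
    intro a b
    by_cases hab : max a a₀ ≤ b
    · exact ⟨h _ _ (le_max_right a a₀) hab, hfin _ _ (le_max_right a a₀) hab⟩
    · simp [Ioc_eq_empty_of_le (not_le.1 hab).le]
  refine Measure.ext_of_Ioc' _ _ (fun a b _ => ?_) (fun a b _ => ?_) <;>
    simp only [Measure.restrict_apply measurableSet_Ioc, Ioc_inter_Ioi]
  exacts [(key a b).2, (key a b).1]

lemma integral_eq_of_restrict_Ioi_eq {μ ν : Measure ℝ} {g : ℝ → ℝ} {a₀ : ℝ}
    (hg : ∀ x ≤ a₀, g x = 0) (h : μ.restrict (Ioi a₀) = ν.restrict (Ioi a₀)) :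
    ∫ x, g x ∂μ = ∫ x, g x ∂ν := by
  have hcompl : ∀ x ∉ Ioi a₀, g x = 0 := fun x hx => hg x (not_lt.1 hx)
  rw [← setIntegral_eq_integral_of_forall_compl_eq_zero hcompl, h,
    setIntegral_eq_integral_of_forall_compl_eq_zero hcompl]

section GridPushforward

variable {ν : Measure ℝ} {Ψ : ℝ → ℝ} {t s r : ℝ}

lemma map_gridRound_apply_Ioc
    (hν : ∀ a b : ℝ, 0 < a → a ≤ b → ν (Ioc a b) = ENNReal.ofReal (Ψ a - Ψ b))
    (ht : 0 < t) (hr : 0 < r) {a b : ℝ} (hra : r + s ≤ a) (hab : a ≤ b) :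
    (ν.restrict (Ioi r)).map (gridRound t s) (Ioc a b) =
      ENNReal.ofReal (Ψ (gridNext t s a) - Ψ (gridNext t s b)) := by
  have hr_lt : r < gridNext t s a := by linarith [sub_lt_gridNext s ht a]
  rw [Measure.map_apply (measurable_gridRound s) measurableSet_Ioc,
    Measure.restrict_apply (measurable_gridRound s measurableSet_Ioc),
    gridRound_preimage_Ioc s ht, Ioc_inter_Ioi, max_eq_left hr_lt.le]
  exact hν _ _ (hr.trans hr_lt) (gridNext_mono s ht hab)

lemma integral_eq_integral_gridRound {m : Measure ℝ} {g : ℝ → ℝ} {a₀ : ℝ}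
    (hν : ∀ a b : ℝ, 0 < a → a ≤ b → ν (Ioc a b) = ENNReal.ofReal (Ψ a - Ψ b))
    (hm : ∀ a b : ℝ, 0 ≤ a → a ≤ b →
      m (Ioc a b) = ENNReal.ofReal (Ψ (gridNext t s a) - Ψ (gridNext t s b)))
    (ht : 0 < t) (hr : 0 < r) (hra : r + s ≤ a₀) (ha₀ : 0 ≤ a₀)
    (hg : Continuous g) (hg₀ : ∀ x ≤ a₀, g x = 0) :
    ∫ x, g x ∂m = ∫ x, g (gridRound t s x) ∂ν.restrict (Ioi r) := by
  have hrestrict :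
      m.restrict (Ioi a₀) = ((ν.restrict (Ioi r)).map (gridRound t s)).restrict (Ioi a₀) :=
    restrict_Ioi_eq_of_forall_Ioc
      (fun a b ha hab => by
        rw [hm a b (ha₀.trans ha) hab, map_gridRound_apply_Ioc hν ht hr (hra.trans ha) hab])
      (fun a b ha hab => by rw [hm a b (ha₀.trans ha) hab]; exact ENNReal.ofReal_ne_top)
  rw [integral_eq_of_restrict_Ioi_eq hg₀ hrestrict,
    integral_map (measurable_gridRound s).aemeasurable hg.aestronglyMeasurable]

lemma natCast_mul_integral_eq_integral_gridRound {μ : Measure ℝ} {H : ℝ → ℝ} {n : ℕ}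
    {g : ℝ → ℝ} {a₀ : ℝ}
    (hν : ∀ a b : ℝ, 0 < a → a ≤ b → ν (Ioc a b) = ENNReal.ofReal (Ψ a - Ψ b))
    (hμ : ∀ a b : ℝ, 0 ≤ a → a ≤ b → μ (Ioc a b) = ENNReal.ofReal (H a - H b))
    (hH : ∀ w : ℝ, 0 ≤ w → H w = Ψ (gridNext t s w) / n) (hn : n ≠ 0)
    (ht : 0 < t) (hr : 0 < r) (hra : r + s ≤ a₀) (ha₀ : 0 ≤ a₀)
    (hg : Continuous g) (hg₀ : ∀ x ≤ a₀, g x = 0) :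
    n * ∫ x, g x ∂μ = ∫ x, g (gridRound t s x) ∂ν.restrict (Ioi r) := by
  have hm : ∀ a b, 0 ≤ a → a ≤ b → ((n : ℝ≥0∞) • μ) (Ioc a b) =
      ENNReal.ofReal (Ψ (gridNext t s a) - Ψ (gridNext t s b)) := by
    intro a b ha hab
    rw [Measure.smul_apply, hμ a b ha hab, hH a ha, hH b (ha.trans hab), smul_eq_mul,
      ← ENNReal.ofReal_natCast, ← ENNReal.ofReal_mul (Nat.cast_nonneg n), ← sub_div,
      mul_div_cancel₀ _ (by positivity)]
  rw [← integral_eq_integral_gridRound hν hm ht hr hra ha₀ hg hg₀, integral_smul_measure,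
    ENNReal.toReal_natCast, smul_eq_mul]

end GridPushforward

lemma tendsto_integral_comp_of_tendsto {α ι : Type*} [MeasurableSpace α] {μ : Measure α}
    [IsFiniteMeasure μ] {l : Filter ι} [l.IsCountablyGenerated] {φ : ι → α → ℝ} {f : α → ℝ}
    {g : ℝ → ℝ} {B : ℝ} (hg : Continuous g) (hB : ∀ y, ‖g y‖ ≤ B) (hφ : ∀ i, Measurable (φ i))
    (hφf : ∀ x, Tendsto (fun i => φ i x) l (𝓝 (f x))) :
    Tendsto (fun i => ∫ x, g (φ i x) ∂μ) l (𝓝 (∫ x, g (f x) ∂μ)) :=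
  tendsto_integral_filter_of_dominated_convergence (fun _ => B)
    (Eventually.of_forall fun i => (hg.measurable.comp (hφ i)).aestronglyMeasurable)
    (Eventually.of_forall fun _ => ae_of_all _ fun _ => hB _) (integrable_const B)
    (ae_of_all _ fun x => (hg.tendsto (f x)).comp (hφf x))

theorem stmt8_general (Ψ : ℝ → ℝ) (c : ℝ) (hc : 0 ≤ c)
    (hinf : Tendsto Ψ (nhdsWithin 0 (Ioi 0)) atTop)
    (hlim : Tendsto Ψ atTop (nhds 0))
    (τ₁ τ₂ τ : ℕ → ℝ) (Hn : ℕ → ℝ → ℝ)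
    (hτ₁ : ∀ n : ℕ, 1 ≤ n → τ₁ n = sInf {w : ℝ | 0 < w ∧ Ψ w ≤ n})
    (hτ₂ : ∀ n : ℕ, 1 ≤ n → τ₂ n = c / n)
    (hτ : ∀ n : ℕ, 1 ≤ n → τ n = τ₁ n + τ₂ n)
    (hHn : ∀ n : ℕ, 1 ≤ n → ∀ w : ℝ, 0 ≤ w →
      Hn n w = Ψ ((((⌊w / τ n⌋ : ℤ) + 1 : ℤ) : ℝ) * τ n - τ₂ n) / n)
    (μ : ℕ → Measure ℝ) (ν : Measure ℝ)
    (hμ : ∀ n : ℕ, 1 ≤ n → ∀ a b : ℝ, 0 ≤ a → a ≤ b →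
      μ n (Ioc a b) = ENNReal.ofReal (Hn n a - Hn n b))
    (hν : ∀ a b : ℝ, 0 < a → a ≤ b → ν (Ioc a b) = ENNReal.ofReal (Ψ a - Ψ b))
    (g : ℝ → ℝ) (hg : ContDiff ℝ 1 g) (hgsupp : HasCompactSupport g)
    (hgsupp' : tsupport g ⊆ Ioi 0) :
    Tendsto (fun n : ℕ => (n : ℝ) * ∫ w, g w ∂(μ n)) atTop
      (nhds (∫ w, g w ∂ν)) := by
  obtain ⟨δ, hδ, hgδ⟩ := exists_pos_forall_le_eq_zero hgsupp hgsupp'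
  obtain ⟨B, hB⟩ := hgsupp.exists_bound_of_continuous hg.continuous
  have : IsFiniteMeasure (ν.restrict (Ioi (δ / 2))) := ⟨by
    rw [Measure.restrict_apply_univ, measure_Ioi_eq_ofReal hν hlim (half_pos hδ)]
    exact ENNReal.ofReal_lt_top⟩
  have hτ₂_lim : Tendsto τ₂ atTop (𝓝 0) := (tendsto_const_div_atTop_nhds_zero_nat c).congr'
    ((eventually_ge_atTop 1).mono fun n hn => (hτ₂ n hn).symm)
  have hτ_lim : Tendsto τ atTop (𝓝 0) := by
    have h := ((tendsto_genInv_atTop Ψ).comp tendsto_natCast_atTop_atTop).add hτ₂_lim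
    rw [add_zero] at h
    exact h.congr' ((eventually_ge_atTop 1).mono fun n hn => by simp [hτ n hn, hτ₁ n hn, genInv])
  have hτ_pos : ∀ n : ℕ, 1 ≤ n → 0 < τ n := fun n hn => by
    rw [hτ n hn, hτ₁ n hn, hτ₂ n hn]
    exact add_pos_of_pos_of_nonneg (genInv_pos hinf hlim (by positivity)) (by positivity)
  have hkey : ∀ᶠ n : ℕ in atTop, (n : ℝ) * ∫ w, g w ∂μ n =
      ∫ x, g (gridRound (τ n) (τ₂ n) x) ∂ν.restrict (Ioi (δ / 2)) := by
    filter_upwards [eventually_ge_atTop 1, hτ₂_lim.eventually_le_const (half_pos hδ)]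
      with n hn hτ₂_le
    exact natCast_mul_integral_eq_integral_gridRound hν (hμ n hn) (hHn n hn) (by omega)
      (hτ_pos n hn) (half_pos hδ) (by linarith) hδ.le hg.continuous hgδ
  have hν_restrict : ν.restrict (Ioi δ) = (ν.restrict (Ioi (δ / 2))).restrict (Ioi δ) := by
    rw [Measure.restrict_restrict measurableSet_Ioi, Ioi_inter_Ioi,
      max_eq_left (half_le_self hδ.le)]
  rw [integral_eq_of_restrict_Ioi_eq hgδ hν_restrict]
  refine (tendsto_integral_comp_of_tendsto hg.continuous hB (fun n => measurable_gridRound _)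
    (tendsto_gridRound ((eventually_ge_atTop 1).mono hτ_pos) hτ_lim hτ₂_lim)).congr' ?_
  exact hkey.mono fun _ h => h.symm

/-- Lemma 4.1 (second statement): with τ₁(n) = Ψ⁻¹(n), τ₂(n) = c/n, τ = τ₁+τ₂ and
H^n(w) = Ψ(⌈w/τ⌉τ − τ₂)/n, for every C¹ function g with compact support in (0,∞),
n ∫ g dH^n → ∫ g dΨ.  Here μ n = −dH^n and ν = −dΨ are the (nonnegative)
Lebesgue–Stieltjes measures of the nonincreasing functions H^n and Ψ, so the claim reads
n ∫ g dμₙ → ∫ g dν. -/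
theorem stmt8 (Ψ : ℝ → ℝ) (β C w₀ c : ℝ)
    (hβ : β ∈ Ioo (0:ℝ) 1) (hC : 0 < C) (hw₀ : 0 < w₀) (hc : 0 ≤ c)
    (hrc : ∀ x : ℝ, 0 < x → ContinuousWithinAt Ψ (Ici x) x)
    (hmono : AntitoneOn Ψ (Ioi 0))
    (hbound : ∀ w : ℝ, 0 < w → w < w₀ → Ψ w ≤ C * w ^ (-β))
    (hinf : Tendsto Ψ (nhdsWithin 0 (Ioi 0)) atTop)
    (hlim : Tendsto Ψ atTop (nhds 0))
    (τ₁ τ₂ τ : ℕ → ℝ) (Hn : ℕ → ℝ → ℝ)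
    (hτ₁ : ∀ n : ℕ, 1 ≤ n → τ₁ n = sInf {w : ℝ | 0 < w ∧ Ψ w ≤ n})
    (hτ₂ : ∀ n : ℕ, 1 ≤ n → τ₂ n = c / n)
    (hτ : ∀ n : ℕ, 1 ≤ n → τ n = τ₁ n + τ₂ n)
    (hHn : ∀ n : ℕ, 1 ≤ n → ∀ w : ℝ, 0 ≤ w →
      Hn n w = Ψ ((((⌊w / τ n⌋ : ℤ) + 1 : ℤ) : ℝ) * τ n - τ₂ n) / n)
    (μ : ℕ → Measure ℝ) (ν : Measure ℝ)
    (hμ : ∀ n : ℕ, 1 ≤ n → ∀ a b : ℝ, 0 ≤ a → a ≤ b →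
      μ n (Ioc a b) = ENNReal.ofReal (Hn n a - Hn n b))
    (hν : ∀ a b : ℝ, 0 < a → a ≤ b → ν (Ioc a b) = ENNReal.ofReal (Ψ a - Ψ b))
    (g : ℝ → ℝ) (hg : ContDiff ℝ 1 g) (hgsupp : HasCompactSupport g)
    (hgsupp' : tsupport g ⊆ Ioi 0) :
    Tendsto (fun n : ℕ => (n : ℝ) * ∫ w, g w ∂(μ n)) atTop
      (nhds (∫ w, g w ∂ν)) :=
  stmt8_general Ψ c hc hinf hlim τ₁ τ₂ τ Hn hτ₁ hτ₂ hτ hHn μ ν hμ hν g hg hgsupp hgsupp'
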